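/- Suppose (α_s)_{s∈ℝ} is a one-parameter unitary group on a Hilbert space H, P the orthogonal projection onto a closed subspace K ⊂ H, and β a self-adjoint unitary with β = 1 on K and β α_s = α_{−s} β for all s. Then for every x ∈ K and s > 0: ‖x − α_{2s} x‖ ≤ 2 ‖α_s x − P(α_s x)‖. -/

import Mathlib

/-- Popa's transversality inequality at the Hilbert-space level: if `(α_s)` is a
strongly continuous one-parameter unitary group on `H`, `P` the orthogonal
projection onto a closed subspace `K`, and `β` a self-adjoint unitary with
`β² = 1`, `β = id` on `K` and `β αₛ = α₋ₛ β`, then for every `x ∈ K` and `s > 0`,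
`‖x − α_{2s} x‖ ≤ 2 ‖αₛ x − P(αₛ x)‖`. -/
theorem popa_transversality
    {H : Type*} [NormedAddCommGroup H] [InnerProductSpace ℂ H] [CompleteSpace H]
    (K : Submodule ℂ H) [K.HasOrthogonalProjection]
    (α : ℝ → (H ≃ₗᵢ[ℂ] H))
    (hαgroup : ∀ s t : ℝ, α (s + t) = (α s).trans (α t))
    (hαcont : ∀ x : H, Continuous (fun s : ℝ => α s x))
    (β : H ≃ₗᵢ[ℂ] H)
    (hβ2 : ∀ x : H, β (β x) = x)
    (hβK : ∀ x ∈ K, β x = x)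
    (hβα : ∀ (s : ℝ) (x : H), β (α s x) = α (-s) (β x)) :
    ∀ x ∈ K, ∀ s : ℝ, 0 < s →
      ‖x - α (2 * s) x‖ ≤ 2 * ‖α s x - (K.orthogonalProjectionOnto (α s x) : H)‖ := by
  intro x hx s hs
  set y := α s x with hy
  set p : H := (K.orthogonalProjectionOnto y : H) with hp
  have h1 : α (-s) (α (2 * s) x) = α s x := by
    have h := hαgroup (2 * s) (-s)
    have h2 : α (2 * s + -s) x = α (-s) (α (2 * s) x) := by rw [h]; rfl
    rw [← h2, show (2*s + -s : ℝ) = s by ring]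
  have hβx : β x = x := hβK x hx
  have hβy : β y = α (-s) x := by rw [hy, hβα, hβx]
  have hβp : β p = p := hβK p (K.orthogonalProjectionOnto y).2
  calc ‖x - α (2 * s) x‖ = ‖α (-s) (x - α (2 * s) x)‖ := ((α (-s)).norm_map _).symm
    _ = ‖α (-s) x - α s x‖ := by rw [map_sub, h1]
    _ = ‖β y - y‖ := by rw [hβy]
    _ = ‖β (y - p) - (y - p)‖ := by rw [map_sub, hβp]; abel_nf
    _ ≤ ‖β (y - p)‖ + ‖y - p‖ := norm_sub_le _ _
    _ = 2 * ‖y - p‖ := by rw [β.norm_map]; ring
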